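/- Let A be a finite set of k ≥ 2 integers with 0 ∈ A, and let α be an integer with 0 ≤ α ≤ k. Then |Σ_α(A)| ≥ ⌊k²/4⌋ − α(α−1)/2 + 1. -/

import Mathlib

/-!
Split `A = {0} ∪ P ∪ N` into its positive and negative parts, with `|P| = p`, `|N| = n`.
For a set `P` of positive integers, removing its largest element `M` and adding the `|P|` new
sums `∑ P - c` (`c ∈ P \ {M}` or `c = 0`), all larger than `∑ (P \ {M})`, shows that
`|Σ_s(P)| ≥ 1 + (s + 1) + ⋯ + p`, and symmetrically for `N`.
Padding a sum from `Σ_{α-1-n}(P)` with `0` and all of `N` lands in `Σ_α(A)` below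
`∑ P + ∑ N`; padding a sum from `Σ_{α-1-p}(N)` with `0` and all of `P` lands above it.
So `|Σ_α(A)| + 1 ≥ |Σ_{α-1-n}(P)| + |Σ_{α-1-p}(N)|`, and the rest is arithmetic.
-/

/-- `sigmaAtLeast A α` is the set of all subset sums of `A` coming from
subsets of size at least `α`. -/
def sigmaAtLeast (A : Finset ℤ) (α : ℕ) : Finset ℤ :=
  (A.powerset.filter (fun B => α ≤ B.card)).image (fun B => B.sum id)

open Finset Pointwise

section SubsetSums

variable {A B C : Finset ℤ} {s t : ℕ} {x : ℤ}

theorem mem_sigmaAtLeast :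
    x ∈ sigmaAtLeast A s ↔ ∃ B ⊆ A, s ≤ #B ∧ ∑ b ∈ B, b = x := by
  simp [sigmaAtLeast, and_assoc]

theorem sigmaAtLeast_mono (h : B ⊆ A) : sigmaAtLeast B s ⊆ sigmaAtLeast A s := by
  intro x hx
  obtain ⟨C, hC, hs, rfl⟩ := mem_sigmaAtLeast.1 hx
  exact mem_sigmaAtLeast.2 ⟨C, hC.trans h, hs, rfl⟩

theorem sigmaAtLeast_anti (h : s ≤ t) : sigmaAtLeast A t ⊆ sigmaAtLeast A s := by
  intro x hx
  obtain ⟨C, hC, ht, rfl⟩ := mem_sigmaAtLeast.1 hx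
  exact mem_sigmaAtLeast.2 ⟨C, hC, h.trans ht, rfl⟩

theorem sum_mem_sigmaAtLeast (hs : s ≤ #A) : ∑ a ∈ A, a ∈ sigmaAtLeast A s :=
  mem_sigmaAtLeast.2 ⟨A, subset_rfl, hs, rfl⟩

theorem sigmaAtLeast_nonempty (hs : s ≤ #A) : (sigmaAtLeast A s).Nonempty :=
  ⟨_, sum_mem_sigmaAtLeast hs⟩

theorem sum_sub_mem_sigmaAtLeast {c : ℤ} (hc : c ∈ A) (hs : s < #A) :
    ∑ a ∈ A, a - c ∈ sigmaAtLeast A s :=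
  mem_sigmaAtLeast.2
    ⟨A.erase c, erase_subset c A, by rw [card_erase_of_mem hc]; omega, sum_erase_eq_sub hc⟩

theorem le_sum_of_mem_sigmaAtLeast (hA : ∀ a ∈ A, 0 ≤ a) (hx : x ∈ sigmaAtLeast A s) :
    x ≤ ∑ a ∈ A, a := by
  obtain ⟨B, hB, -, rfl⟩ := mem_sigmaAtLeast.1 hx
  exact sum_le_sum_of_subset_of_nonneg hB fun a ha _ => hA a ha

theorem neg_sigmaAtLeast_subset : -sigmaAtLeast A s ⊆ sigmaAtLeast (-A) s := by
  intro x hx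
  obtain ⟨y, hy, rfl⟩ := mem_neg.1 hx
  obtain ⟨B, hB, hs, rfl⟩ := mem_sigmaAtLeast.1 hy
  exact mem_sigmaAtLeast.2
    ⟨-B, neg_subset_neg hB, by rwa [card_neg], by rw [sum_neg_index, sum_neg_distrib]⟩

theorem sigmaAtLeast_neg : sigmaAtLeast (-A) s = -sigmaAtLeast A s := by
  refine Subset.antisymm ?_ neg_sigmaAtLeast_subset
  simpa using neg_subset_neg (neg_sigmaAtLeast_subset (A := -A) (s := s))

theorem sum_le_of_mem_sigmaAtLeast (hA : ∀ a ∈ A, a ≤ 0) (hx : x ∈ sigmaAtLeast A s) :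
    ∑ a ∈ A, a ≤ x := by
  have hneg : -x ∈ sigmaAtLeast (-A) s := by
    rw [sigmaAtLeast_neg]
    exact neg_mem_neg hx
  have := le_sum_of_mem_sigmaAtLeast (fun a ha => by linarith [hA _ (mem_neg'.1 ha)]) hneg
  rw [sum_neg_index, sum_neg_distrib] at this
  linarith

theorem add_sum_mem_sigmaAtLeast_union (hBC : Disjoint B C) (hx : x ∈ sigmaAtLeast B s) :
    x + ∑ c ∈ C, c ∈ sigmaAtLeast (B ∪ C) (s + #C) := by
  obtain ⟨D, hD, hs, rfl⟩ := mem_sigmaAtLeast.1 hx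
  have hDC : Disjoint D C := hBC.mono_left hD
  exact mem_sigmaAtLeast.2 ⟨D ∪ C, union_subset_union hD subset_rfl,
    by rw [card_union_of_disjoint hDC]; omega, sum_union hDC⟩

end SubsetSums

section Counting

variable {A B : Finset ℤ} {s α : ℕ}

theorem card_sigmaAtLeast_add_le_insert {a : ℤ} (hB : ∀ b ∈ B, 0 < b) (ha : 0 < a)
    (hBa : ∀ b ∈ B, b < a) (hs : s ≤ #B) :
    #(sigmaAtLeast B s) + (#B + 1) ≤ #(sigmaAtLeast (insert a B) s) := by
  have haB : a ∉ B := fun h => (hBa a h).false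
  set D := (insert 0 B).image (∑ b ∈ insert a B, b - ·)
  have hD : #D = #B + 1 := by
    rw [card_image_of_injective _ sub_right_injective,
      card_insert_of_notMem fun h => (hB 0 h).false]
  have hDsub : D ⊆ sigmaAtLeast (insert a B) s := by
    intro x hx
    obtain ⟨c, hc, rfl⟩ := mem_image.1 hx
    rcases mem_insert.1 hc with rfl | hc
    · simpa using sum_mem_sigmaAtLeast (by rw [card_insert_of_notMem haB]; omega)
    · exact sum_sub_mem_sigmaAtLeast (mem_insert_of_mem hc)
        (by rw [card_insert_of_notMem haB]; omega)
  have hdisj : Disjoint (sigmaAtLeast B s) D := by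
    refine disjoint_left.2 fun x hx hxD => ?_
    obtain ⟨c, hc, rfl⟩ := mem_image.1 hxD
    have hca : c < a := by
      rcases mem_insert.1 hc with rfl | hc
      exacts [ha, hBa c hc]
    have := le_sum_of_mem_sigmaAtLeast (fun b hb => (hB b hb).le) hx
    rw [sum_insert haB] at this
    linarith
  calc #(sigmaAtLeast B s) + (#B + 1) = #(sigmaAtLeast B s ∪ D) := by
        rw [card_union_of_disjoint hdisj, hD]
    _ ≤ #(sigmaAtLeast (insert a B) s) :=
        card_le_card (union_subset (sigmaAtLeast_mono (subset_insert a B)) hDsub)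

theorem two_mul_card_sigmaAtLeast_of_pos (hA : ∀ a ∈ A, 0 < a) (hs : s ≤ #A) :
    #A * (#A + 1) + 2 ≤ 2 * #(sigmaAtLeast A s) + s * (s + 1) := by
  induction A using Finset.induction_on_max generalizing s with
  | empty =>
    obtain rfl : s = 0 := by simpa using hs
    simpa using (sigmaAtLeast_nonempty (A := ∅) le_rfl).card_pos
  | insert a B hBa ih =>
    have haB : a ∉ B := fun h => (hBa a h).false
    have hB : ∀ b ∈ B, 0 < b := fun b hb => hA b (mem_insert_of_mem hb)
    rw [card_insert_of_notMem haB] at hs ⊢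
    rcases hs.lt_or_eq with hs | rfl
    · have hstep := card_sigmaAtLeast_add_le_insert hB (hA a (mem_insert_self a B)) hBa
        (Nat.lt_succ_iff.1 hs)
      nlinarith [ih hB (Nat.lt_succ_iff.1 hs)]
    · have := (sigmaAtLeast_nonempty (A := insert a B) (s := #B + 1)
        (by rw [card_insert_of_notMem haB])).card_pos
      omega

theorem two_mul_card_sigmaAtLeast_of_neg (hA : ∀ a ∈ A, a < 0) (hs : s ≤ #A) :
    #A * (#A + 1) + 2 ≤ 2 * #(sigmaAtLeast A s) + s * (s + 1) := by
  simpa [sigmaAtLeast_neg] using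
    two_mul_card_sigmaAtLeast_of_pos (A := -A) (fun a ha => by linarith [hA _ (mem_neg'.1 ha)])
      (by rwa [card_neg])

theorem add_sum_mem_sigmaAtLeast_insert_zero {P N : Finset ℤ} {x : ℤ} (h0P : (0 : ℤ) ∉ P)
    (h0N : (0 : ℤ) ∉ N) (hPN : Disjoint P N) (hs : α ≤ s + #N + 1)
    (hx : x ∈ sigmaAtLeast P s) :
    x + ∑ a ∈ N, a ∈ sigmaAtLeast (insert 0 (P ∪ N)) α := by
  have := add_sum_mem_sigmaAtLeast_union (disjoint_insert_right.2 ⟨h0P, hPN⟩) hx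
  rw [sum_insert h0N, zero_add, card_insert_of_notMem h0N, union_insert] at this
  exact sigmaAtLeast_anti (by omega) this

theorem card_add_card_sigmaAtLeast_le {P N : Finset ℤ} {t : ℕ} (hP : ∀ a ∈ P, 0 < a)
    (hN : ∀ a ∈ N, a < 0) (hs : α ≤ s + #N + 1) (ht : α ≤ t + #P + 1) :
    #(sigmaAtLeast P s) + #(sigmaAtLeast N t) ≤ #(sigmaAtLeast (insert 0 (P ∪ N)) α) + 1 := by
  have h0P : (0 : ℤ) ∉ P := fun h => (hP 0 h).false
  have h0N : (0 : ℤ) ∉ N := fun h => (hN 0 h).false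
  have hPN : Disjoint P N := disjoint_left.2 fun a ha ha' => (hP a ha).asymm (hN a ha')
  set X := (sigmaAtLeast P s).image (· + ∑ a ∈ N, a)
  set Y := (sigmaAtLeast N t).image (· + ∑ a ∈ P, a)
  have hX : X ⊆ sigmaAtLeast (insert 0 (P ∪ N)) α := by
    intro z hz
    obtain ⟨x, hx, rfl⟩ := mem_image.1 hz
    exact add_sum_mem_sigmaAtLeast_insert_zero h0P h0N hPN hs hx
  have hY : Y ⊆ sigmaAtLeast (insert 0 (P ∪ N)) α := by
    intro z hz
    obtain ⟨y, hy, rfl⟩ := mem_image.1 hz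
    rw [union_comm]
    exact add_sum_mem_sigmaAtLeast_insert_zero h0N h0P hPN.symm ht hy
  have hXY : X ∩ Y ⊆ {∑ a ∈ P, a + ∑ a ∈ N, a} := by
    intro z hz
    obtain ⟨hzX, hzY⟩ := mem_inter.1 hz
    obtain ⟨x, hx, rfl⟩ := mem_image.1 hzX
    obtain ⟨y, hy, hyx⟩ := mem_image.1 hzY
    have hxP := le_sum_of_mem_sigmaAtLeast (fun a ha => (hP a ha).le) hx
    have hNy := sum_le_of_mem_sigmaAtLeast (fun a ha => (hN a ha).le) hy
    rw [mem_singleton]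
    linarith
  calc #(sigmaAtLeast P s) + #(sigmaAtLeast N t) = #X + #Y := by
        rw [card_image_of_injective _ (add_left_injective _),
          card_image_of_injective _ (add_left_injective _)]
    _ = #(X ∪ Y) + #(X ∩ Y) := (card_union_add_card_inter X Y).symm
    _ ≤ #(sigmaAtLeast (insert 0 (P ∪ N)) α) + 1 :=
        add_le_add (card_le_card (union_subset hX hY))
          ((card_le_card hXY).trans_eq (card_singleton _))

theorem insert_zero_filter_pos_union_filter_neg (h0 : 0 ∈ A) :
    insert 0 (A.filter (0 < ·) ∪ A.filter (· < 0)) = A := by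
  ext x
  simp only [mem_insert, mem_union, mem_filter]
  constructor
  · rintro (rfl | ⟨hx, -⟩ | ⟨hx, -⟩) <;> assumption
  · intro hx
    rcases lt_trichotomy 0 x with h | rfl | h <;> simp [*]

end Counting

theorem two_mul_sq_div_four_le (a b : ℕ) :
    2 * ((a + b + 1) ^ 2 / 4) ≤ a * (a + 1) + b * (b + 1) := by
  rcases lt_trichotomy a b with hab | rfl | hab
  · have := Nat.div_mul_le_self ((a + b + 1) ^ 2) 4
    nlinarith [Nat.mul_le_mul hab hab]
  · have : (a + a + 1) ^ 2 = 4 * (a * (a + 1)) + 1 := by ring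
    omega
  · have := Nat.div_mul_le_self ((a + b + 1) ^ 2) 4
    nlinarith [Nat.mul_le_mul hab hab]

theorem two_mul_sq_div_four_add_le {a b α : ℕ} (hα : α ≤ a + b + 1) :
    2 * ((a + b + 1) ^ 2 / 4) + (α - 1 - b) * (α - 1 - b + 1) + (α - 1 - a) * (α - 1 - a + 1)
      + α ≤ a * (a + 1) + b * (b + 1) + α * α := by
  have hF := two_mul_sq_div_four_le a b
  have h4 := Nat.div_mul_le_self ((a + b + 1) ^ 2) 4
  rcases le_or_gt α (b + 1) with hb | hb <;> rcases le_or_gt α (a + 1) with ha | ha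
  · rw [Nat.sub_eq_zero_of_le (by omega : α - 1 ≤ b),
      Nat.sub_eq_zero_of_le (by omega : α - 1 ≤ a)]
    nlinarith
  · obtain ⟨t, rfl⟩ : ∃ t, α = t + a + 2 := ⟨α - a - 2, by omega⟩
    rw [Nat.sub_eq_zero_of_le (by omega : t + a + 2 - 1 ≤ b),
      (by omega : t + a + 2 - 1 - a = t + 1)]
    nlinarith
  · obtain ⟨s, rfl⟩ : ∃ s, α = s + b + 2 := ⟨α - b - 2, by omega⟩
    rw [Nat.sub_eq_zero_of_le (by omega : s + b + 2 - 1 ≤ a),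
      (by omega : s + b + 2 - 1 - b = s + 1)]
    nlinarith
  · obtain ⟨x, y, d, rfl, rfl, rfl⟩ :
        ∃ x y d, a = x + 1 + d ∧ b = y + 1 + d ∧ α = x + y + d + 3 :=
      ⟨α - b - 2, α - a - 2, a + b + 1 - α, by omega, by omega, by omega⟩
    rw [(by omega : x + y + d + 3 - 1 - (y + 1 + d) = x + 1),
      (by omega : x + y + d + 3 - 1 - (x + 1 + d) = y + 1)]
    nlinarith

theorem stmt_12_general (k α : ℕ) (A : Finset ℤ) (hcard : A.card = k)
    (h0 : (0 : ℤ) ∈ A) (hα : α ≤ k) :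
    ((sigmaAtLeast A α).card : ℤ) ≥
      (k : ℤ) ^ 2 / 4 - (α : ℤ) * ((α : ℤ) - 1) / 2 + 1 := by
  set P := A.filter (0 < ·)
  set N := A.filter (· < 0)
  have hP : ∀ a ∈ P, 0 < a := fun a ha => (mem_filter.1 ha).2
  have hN : ∀ a ∈ N, a < 0 := fun a ha => (mem_filter.1 ha).2
  have hA := insert_zero_filter_pos_union_filter_neg h0
  have hk : #P + #N + 1 = k := by
    rw [← hcard, ← hA, card_insert_of_notMem (by simp),
      card_union_of_disjoint (disjoint_filter.2 fun a _ h h' => h.asymm h')]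
  have hchains := card_add_card_sigmaAtLeast_le (α := α) (s := α - 1 - #N) (t := α - 1 - #P)
    hP hN (by omega) (by omega)
  have hPs := two_mul_card_sigmaAtLeast_of_pos hP (s := α - 1 - #N) (by omega)
  have hNt := two_mul_card_sigmaAtLeast_of_neg hN (s := α - 1 - #P) (by omega)
  have hnum := two_mul_sq_div_four_add_le (a := #P) (b := #N) (by omega : α ≤ #P + #N + 1)
  rw [hA] at hchains
  rw [hk] at hnum
  have hα2 : (α : ℤ) * ((α : ℤ) - 1) / 2 * 2 = α * α - α := by
    rw [Int.ediv_mul_cancel (Int.even_mul_pred_self α).two_dvd]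
    ring
  zify at hchains hPs hNt hnum
  linarith

theorem stmt_12 (k α : ℕ) (hk : 2 ≤ k) (A : Finset ℤ) (hcard : A.card = k)
    (h0 : (0 : ℤ) ∈ A) (hα : α ≤ k) :
    ((sigmaAtLeast A α).card : ℤ) ≥
      (k : ℤ) ^ 2 / 4 - (α : ℤ) * ((α : ℤ) - 1) / 2 + 1 :=
  stmt_12_general k α A hcard h0 hα
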